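/- Let (θ,ρ) ∈ ℝ^{2d}, h > 0, R ≥ 1, M ∈ ℕ, B ∈ {0,1}^M. Write ℓ_min = ℓ_min(θ,ρ,B,h,R), a_T = a_{ℓ_min}(B), b_T = b_{ℓ_min}(B), let L ∈ [a_T : b_T], and set B* = B*(L, a_T, b_T, B). Then ℓ_min(θ,ρ,B,h,R) = ℓ_min(Φ_{h/R}^{RL}(θ,ρ), B*, h, R); that is, the number of orbit doublings selected by the no-U-turn procedure is the same from the initial point (θ,ρ) with sequence B as from the shifted point Φ_{h/R}^{RL}(θ,ρ) with the transformed sequence B*. -/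

import Mathlib

open MeasureTheory

noncomputable section

/-! ### Combinatorial definitions for NUTS orbit selection -/

/-- Floor midpoint `⌊(a+b)/2⌋`. -/
def mid (a b : ℤ) : ℤ := (a + b) / 2

/-- `(−1)^x` for a bit `x`. -/
def signBit (x : Bool) : ℤ := if x then -1 else 1

/-- Left endpoint `a_ℓ(B)` of the orbit built from the Bernoulli directions `B` (1-indexed). -/
def aEnd (B : ℕ → Bool) : ℕ → ℤ
  | 0 => 0
  | ℓ + 1 => min (aEnd B ℓ) (aEnd B ℓ + signBit (B (ℓ + 1)) * 2 ^ ℓ)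

/-- Right endpoint `b_ℓ(B)`. -/
def bEnd (B : ℕ → Bool) : ℕ → ℤ
  | 0 => 0
  | ℓ + 1 => max (bEnd B ℓ) (bEnd B ℓ + signBit (B (ℓ + 1)) * 2 ^ ℓ)

/-- Proposed extension endpoint `ã_ℓ(B) = a_{ℓ−1}(B) + (−1)^{B_ℓ} 2^{ℓ−1}` (for `ℓ ≥ 1`). -/
def aT (B : ℕ → Bool) (ℓ : ℕ) : ℤ := aEnd B (ℓ - 1) + signBit (B ℓ) * 2 ^ (ℓ - 1)

/-- Proposed extension endpoint `b̃_ℓ(B) = b_{ℓ−1}(B) + (−1)^{B_ℓ} 2^{ℓ−1}` (for `ℓ ≥ 1`). -/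
def bT (B : ℕ → Bool) (ℓ : ℕ) : ℤ := bEnd B (ℓ - 1) + signBit (B ℓ) * 2 ^ (ℓ - 1)

/-- The binary string `β(L,a,b)`: `beta ℓ L a b i` is the `i`-th bit (1-indexed) of
`(β_i(L,a,b))_{i ∈ [1:ℓ]}`, where `[a:b]` is an interval with `b − a + 1 = 2^ℓ`. -/
def beta : ℕ → ℤ → ℤ → ℤ → ℕ → Bool
  | 0, _, _, _, _ => false
  | ℓ + 1, L, a, b, i =>
      if i = ℓ + 1 then decide (mid a b + 1 ≤ L)
      else if mid a b + 1 ≤ L then beta ℓ L (mid a b + 1) b i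
      else beta ℓ L a (mid a b) i

/-- The transformed sequence `B*(L,a,b,B)`: bits `1..ℓ` come from `β(L,a,b)`, the rest from `B`. -/
def bstar (ℓ : ℕ) (L a b : ℤ) (B : ℕ → Bool) : ℕ → Bool :=
  fun i => if 1 ≤ i ∧ i ≤ ℓ then beta ℓ L a b i else B i

/-- The domain `D`: tuples `(B, ℓ, a, b, L)` with `ℓ ∈ [1:M]`, `a = a_ℓ(B)`, `b = b_ℓ(B)`,
`a ≤ L ≤ b`. -/
def memD (M : ℕ) (B : ℕ → Bool) (ℓ : ℕ) (a b L : ℤ) : Prop :=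
  1 ≤ ℓ ∧ ℓ ≤ M ∧ a = aEnd B ℓ ∧ b = bEnd B ℓ ∧ a ≤ L ∧ L ≤ b

/-- The levels of the binary tree of subintervals of `[a:b]`: `treeLevel a b k` is the family of
intervals (coded as pairs) obtained from `[a:b]` by `k` successive halvings; with
`b − a + 1 = 2^ℓ` this is `T_{ℓ−k}([a:b])` of the paper. -/
def treeLevel (a b : ℤ) : ℕ → Set (ℤ × ℤ)
  | 0 => {(a, b)}
  | k + 1 => {p | ∃ q ∈ treeLevel a b k,
      p = (q.1, mid q.1 q.2) ∨ p = (mid q.1 q.2 + 1, q.2)}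

/-- The binary tree `T([a:b]) = ∪_{j=0}^{ℓ} T_j([a:b])` of subintervals of an interval `[a:b]`
with `b − a + 1 = 2^ℓ`. -/
def tree (ℓ : ℕ) (a b : ℤ) : Set (ℤ × ℤ) := ⋃ k ≤ ℓ, treeLevel a b k

/-! ### Leapfrog dynamics -/

/-- The state space `ℝ^d`. -/
abbrev ES (d : ℕ) := EuclideanSpace ℝ (Fin d)

/-- The momentum flip `S(θ,ρ) = (θ,−ρ)`. -/
def flipMom {d : ℕ} (p : ES d × ES d) : ES d × ES d := (p.1, -p.2)

/-- One leapfrog step of size `h` for the potential `U`. -/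
def leapfrog {d : ℕ} (U : ES d → ℝ) (h : ℝ) (p : ES d × ES d) : ES d × ES d :=
  let ρh := p.2 - (h / 2) • gradient U p.1
  let θ' := p.1 + h • ρh
  (θ', ρh - (h / 2) • gradient U θ')

/-- Integer iterates `Φ_h^i`, `i ∈ ℤ`, of the leapfrog integrator (negative iterates use the
inverse `S ∘ Φ_h ∘ S`). -/
def leapfrogIter {d : ℕ} (U : ES d → ℝ) (h : ℝ) : ℤ → ES d × ES d → ES d × ES d
  | Int.ofNat n => (leapfrog U h)^[n]
  | Int.negSucc n => (flipMom ∘ leapfrog U h ∘ flipMom)^[n + 1]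

/-- The Hamiltonian `H(θ,ρ) = U(θ) + |ρ|²/2`. -/
def Ham {d : ℕ} (U : ES d → ℝ) (p : ES d × ES d) : ℝ := U p.1 + (1 / 2) * ‖p.2‖ ^ 2

open Classical in
/-- The U-turn indicator `𝟙_Uturn(a,b,θ,ρ,h,R)` (coarse step size `hs`, fine step `hs/R`). -/
def uturnInd {d : ℕ} (U : ES d → ℝ) (hs : ℝ) (R : ℕ) (a b : ℤ) (p : ES d × ES d) : ℕ :=
  let qm := leapfrogIter U (hs / R) (R * a) p
  let qp := leapfrogIter U (hs / R) (R * b) p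
  if (inner ℝ qp.2 (qp.1 - qm.1) : ℝ) < 0 ∨ (inner ℝ qm.2 (qp.1 - qm.1) : ℝ) < 0 then 1 else 0

/-- The sub-U-turn indicator `𝟙_subUturn(a,b,θ,ρ,h,R)`, defined recursively by halving. -/
def subUturnInd {d : ℕ} (U : ES d → ℝ) (hs : ℝ) (R : ℕ) (p : ES d × ES d) (a b : ℤ) : ℕ :=
  if h : a < b then
    max (max (subUturnInd U hs R p a (mid a b)) (subUturnInd U hs R p (mid a b + 1) b))
      (uturnInd U hs R a b p)
  else 0
termination_by (b - a).toNat
decreasing_by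
  · have h1 : a ≤ mid a b := by unfold mid; omega
    have h2 : mid a b < b := by unfold mid; omega
    omega
  · have h1 : a ≤ mid a b := by unfold mid; omega
    have h2 : mid a b < b := by unfold mid; omega
    omega

/-- The number of doublings `ℓ_min(θ,ρ,B,h,R)` selected by the no-U-turn procedure with at most
`2^M` leapfrog iterates. -/
def ellMin {d : ℕ} (U : ES d → ℝ) (hs : ℝ) (R : ℕ) (M : ℕ) (B : ℕ → Bool)
    (p : ES d × ES d) : ℕ :=
  sInf ({ℓ | 1 ≤ ℓ ∧ ℓ ≤ M - 1 ∧
      (uturnInd U hs R (aEnd B ℓ) (bEnd B ℓ) p = 1 ∨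
        subUturnInd U hs R p (aT B (ℓ + 1)) (bT B (ℓ + 1)) = 1)} ∪ {M})

/-- The categorical (Boltzmann) index-selection kernel `Q(L | θ, ρ, a, b, h, R)`. -/
def Qkernel {d : ℕ} (U : ES d → ℝ) (hs : ℝ) (R : ℕ) (p : ES d × ES d)
    (a b L : ℤ) : ℝ :=
  if a ≤ L ∧ L ≤ b then
    Real.exp (-Ham U (leapfrogIter U (hs / R) (R * L) p)) /
      ∑ k ∈ Finset.Icc a b, Real.exp (-Ham U (leapfrogIter U (hs / R) (R * k) p))
  else 0

/-! ### The standard normal target -/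

/-- One leapfrog step of size `h` for the standard normal potential `U(θ) = |θ|²/2`
(for which `∇U(θ) = θ`). -/
def gaussLeapfrog {d : ℕ} (h : ℝ) (p : ES d × ES d) : ES d × ES d :=
  let ρh := p.2 - (h / 2) • p.1
  let θ' := p.1 + h • ρh
  (θ', ρh - (h / 2) • θ')

/-- Integer iterates of the standard normal leapfrog integrator. -/
def gaussLeapfrogIter {d : ℕ} (h : ℝ) : ℤ → ES d × ES d → ES d × ES d
  | Int.ofNat n => (gaussLeapfrog h)^[n]
  | Int.negSucc n => (flipMom ∘ gaussLeapfrog h ∘ flipMom)^[n + 1]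

/-- The standard normal Hamiltonian `H(θ,ρ) = (|θ|² + |ρ|²)/2`. -/
def gaussHam {d : ℕ} (p : ES d × ES d) : ℝ := (1 / 2) * (‖p.1‖ ^ 2 + ‖p.2‖ ^ 2)

/-- The modified Hamiltonian `H_h(θ,ρ) = (1 − h²/4)|θ|²/2 + |ρ|²/2` preserved by the standard
normal leapfrog integrator for `h ∈ (0,2)`. -/
def gaussHamMod {d : ℕ} (h : ℝ) (p : ES d × ES d) : ℝ :=
  (1 / 2) * (1 - h ^ 2 / 4) * ‖p.1‖ ^ 2 + (1 / 2) * ‖p.2‖ ^ 2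

end

/-!
Leapfrog iterates form a `ℤ`-action, so moving the base point to `Φ_{h/R}^{RL}(θ,ρ)` translates
every index interval by `-L`. The bits `β(L, a_T, b_T)` are chosen so that the orbit of `B*` after
`ℓ_min` doublings, translated by `L`, is again `[a_T:b_T]`, and beyond `ℓ_min` the sequence `B*`
agrees with `B`. Not stopping at any step `k ≤ n` is equivalent to neither half of the orbit after
`n + 1` doublings containing a sub-U-turn, a condition on that orbit alone. Hence both procedures
pass the steps `k < ℓ_min`, and at step `ℓ_min` they evaluate the same criterion.
-/

lemma Nat.sInf_eq_sInf_of_mem_iff {s t : Set ℕ} (hs : s.Nonempty)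
    (h : ∀ k ≤ sInf s, k ∈ s ↔ k ∈ t) : sInf s = sInf t := by
  have hst : sInf s ∈ t := (h _ le_rfl).1 (Nat.sInf_mem hs)
  have hts : sInf t ≤ sInf s := Nat.sInf_le hst
  exact le_antisymm (Nat.sInf_le ((h _ hts).2 (Nat.sInf_mem ⟨_, hst⟩))) hts

section Leapfrog

variable {d : ℕ} (U : ES d → ℝ) (h : ℝ)

lemma flipMom_flipMom (p : ES d × ES d) : flipMom (flipMom p) = p := by
  simp [flipMom]

lemma leapfrog_flipMom_leapfrog (p : ES d × ES d) :
    leapfrog U h (flipMom (leapfrog U h p)) = flipMom p := by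
  obtain ⟨θ, ρ⟩ := p
  simp only [leapfrog, flipMom]
  generalize hθ' : θ + h • (ρ - (h / 2) • gradient U θ) = θ'
  have hθ : θ' + h • (-(ρ - (h / 2) • gradient U θ - (h / 2) • gradient U θ')
      - (h / 2) • gradient U θ') = θ := by
    rw [← hθ']; module
  rw [hθ, Prod.mk.injEq]
  exact ⟨rfl, by module⟩

noncomputable def leapfrogPerm : Equiv.Perm (ES d × ES d) where
  toFun := leapfrog U h
  invFun := flipMom ∘ leapfrog U h ∘ flipMom
  left_inv p := by simp [leapfrog_flipMom_leapfrog, flipMom_flipMom]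
  right_inv p := by simp [leapfrog_flipMom_leapfrog, flipMom_flipMom]

lemma leapfrogIter_eq_zpow (i : ℤ) : leapfrogIter U h i = ⇑(leapfrogPerm U h ^ i) := by
  cases i with
  | ofNat n => exact (leapfrogPerm U h).iterate_eq_pow n
  | negSucc n =>
    rw [leapfrogIter, zpow_negSucc, ← inv_pow, ← Equiv.Perm.iterate_eq_pow]
    rfl

lemma leapfrogIter_add (i j : ℤ) (p : ES d × ES d) :
    leapfrogIter U h (i + j) p = leapfrogIter U h i (leapfrogIter U h j p) := by
  simp only [leapfrogIter_eq_zpow, zpow_add, Equiv.Perm.mul_apply]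

end Leapfrog

section Indicators

variable {d : ℕ} (U : ES d → ℝ) (hs : ℝ) (R : ℕ) (p : ES d × ES d)

lemma uturnInd_le_one (a b : ℤ) : uturnInd U hs R a b p ≤ 1 := by
  simp only [uturnInd]; split_ifs <;> simp

lemma uturnInd_self (a : ℤ) : uturnInd U hs R a a p = 0 := by
  simp [uturnInd]

lemma uturnInd_shift (L a b : ℤ) :
    uturnInd U hs R a b (leapfrogIter U (hs / R) (R * L) p) =
      uturnInd U hs R (a + L) (b + L) p := by
  simp only [uturnInd, ← leapfrogIter_add, ← mul_add]

lemma subUturnInd_of_lt {a b : ℤ} (hab : a < b) :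
    subUturnInd U hs R p a b =
      max (max (subUturnInd U hs R p a (mid a b)) (subUturnInd U hs R p (mid a b + 1) b))
        (uturnInd U hs R a b p) := by
  rw [subUturnInd, dif_pos hab]

lemma subUturnInd_of_not_lt {a b : ℤ} (hab : ¬ a < b) : subUturnInd U hs R p a b = 0 := by
  rw [subUturnInd, dif_neg hab]

lemma subUturnInd_le_one (a b : ℤ) : subUturnInd U hs R p a b ≤ 1 := by
  induction a, b using subUturnInd.induct with
  | case1 a b hab ih₁ ih₂ =>
    rw [subUturnInd_of_lt U hs R p hab]
    exact max_le (max_le ih₁ ih₂) (uturnInd_le_one U hs R p a b)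
  | case2 a b hab => simp [subUturnInd_of_not_lt U hs R p hab]

lemma mid_add_add (a b L : ℤ) : mid (a + L) (b + L) = mid a b + L := by
  unfold mid; omega

lemma subUturnInd_shift (L a b : ℤ) :
    subUturnInd U hs R (leapfrogIter U (hs / R) (R * L) p) a b =
      subUturnInd U hs R p (a + L) (b + L) := by
  induction a, b using subUturnInd.induct with
  | case1 a b hab ih₁ ih₂ =>
    rw [subUturnInd_of_lt U hs R _ hab, subUturnInd_of_lt U hs R p (by omega), mid_add_add,
      ih₁, ih₂, uturnInd_shift, add_right_comm]
  | case2 a b hab =>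
    rw [subUturnInd_of_not_lt U hs R _ hab, subUturnInd_of_not_lt U hs R p (by omega)]

def HalvesSubUturnFree (a b : ℤ) : Prop :=
  subUturnInd U hs R p a (mid a b) = 0 ∧ subUturnInd U hs R p (mid a b + 1) b = 0

lemma subUturnInd_eq_zero_iff {a b : ℤ} (hab : a < b) :
    subUturnInd U hs R p a b = 0 ↔
      HalvesSubUturnFree U hs R p a b ∧ uturnInd U hs R a b p = 0 := by
  rw [subUturnInd_of_lt U hs R p hab, Nat.max_eq_zero_iff, Nat.max_eq_zero_iff, HalvesSubUturnFree]

lemma halvesSubUturnFree_shift (L a b : ℤ) :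
    HalvesSubUturnFree U hs R (leapfrogIter U (hs / R) (R * L) p) a b ↔
      HalvesSubUturnFree U hs R p (a + L) (b + L) := by
  simp only [HalvesSubUturnFree, subUturnInd_shift, mid_add_add, add_right_comm]

end Indicators

section Orbits

lemma bEnd_eq_aEnd_add (B : ℕ → Bool) (n : ℕ) : bEnd B n = aEnd B n + 2 ^ n - 1 := by
  induction n with
  | zero => rfl
  | succ n ih => cases hB : B (n + 1) <;> simp [aEnd, bEnd, hB, signBit, ih] <;> omega

lemma aEnd_lt_bEnd (B : ℕ → Bool) (n : ℕ) : aEnd B (n + 1) < bEnd B (n + 1) := by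
  have := bEnd_eq_aEnd_add B (n + 1)
  have : (1 : ℤ) < 2 ^ (n + 1) := one_lt_pow₀ one_lt_two n.succ_ne_zero
  omega

lemma halves_orbit_succ (B : ℕ → Bool) (n : ℕ) :
    ((aEnd B (n + 1), mid (aEnd B (n + 1)) (bEnd B (n + 1))),
        (mid (aEnd B (n + 1)) (bEnd B (n + 1)) + 1, bEnd B (n + 1))) =
      if B (n + 1) then ((aT B (n + 1), bT B (n + 1)), (aEnd B n, bEnd B n))
      else ((aEnd B n, bEnd B n), (aT B (n + 1), bT B (n + 1))) := by
  have := bEnd_eq_aEnd_add B n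
  cases hB : B (n + 1) <;> simp [aEnd, bEnd, aT, bT, hB, signBit, mid] <;> omega

lemma eqOn_beta_succ {n : ℕ} {L a b : ℤ} {Bx : ℕ → Bool}
    (hBx : Set.EqOn Bx (beta (n + 1) L a b) (Set.Icc 1 (n + 1))) :
    Bx (n + 1) = decide (mid a b + 1 ≤ L) ∧
      Set.EqOn Bx (if mid a b + 1 ≤ L then beta n L (mid a b + 1) b else beta n L a (mid a b))
        (Set.Icc 1 n) := by
  refine ⟨by simp [hBx ⟨by omega, le_rfl⟩, beta], fun i hi => ?_⟩
  rw [hBx ⟨hi.1, hi.2.trans n.le_succ⟩, beta, if_neg (by have := hi.2; omega)]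
  split_ifs <;> rfl

lemma orbit_add_eq_of_eqOn_beta {n : ℕ} {L a b : ℤ} {Bx : ℕ → Bool}
    (hb : b = a + 2 ^ n - 1) (haL : a ≤ L) (hLb : L ≤ b)
    (hBx : Set.EqOn Bx (beta n L a b) (Set.Icc 1 n)) :
    aEnd Bx n + L = a ∧ bEnd Bx n + L = b := by
  induction n generalizing a b with
  | zero => simp only [aEnd, bEnd]; omega
  | succ n ih =>
    have hm : mid a b = a + 2 ^ n - 1 := by unfold mid; rw [pow_succ] at hb; omega
    obtain ⟨htop, hlow⟩ := eqOn_beta_succ hBx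
    by_cases hL : mid a b + 1 ≤ L
    · rw [if_pos hL] at hlow
      obtain ⟨h₁, h₂⟩ := ih (by rw [pow_succ] at hb; omega) hL hLb hlow
      simp only [aEnd, bEnd, htop, hL, decide_true, signBit, if_true]
      omega
    · rw [if_neg hL] at hlow
      obtain ⟨h₁, h₂⟩ := ih (by omega) haL (by omega) hlow
      simp only [aEnd, bEnd, htop, hL, decide_false, signBit, Bool.false_eq_true, if_false]
      omega

lemma eqOn_bstar (n : ℕ) (L a b : ℤ) (B : ℕ → Bool) :
    Set.EqOn (bstar n L a b B) (beta n L a b) (Set.Icc 1 n) :=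
  fun _ hi => if_pos hi

lemma bstar_succ (n : ℕ) (L a b : ℤ) (B : ℕ → Bool) : bstar n L a b B (n + 1) = B (n + 1) :=
  if_neg (by omega)

lemma orbit_bstar_add {B : ℕ → Bool} {n : ℕ} {L : ℤ}
    (hL₁ : aEnd B n ≤ L) (hL₂ : L ≤ bEnd B n) :
    aEnd (bstar n L (aEnd B n) (bEnd B n) B) n + L = aEnd B n ∧
      bEnd (bstar n L (aEnd B n) (bEnd B n) B) n + L = bEnd B n :=
  orbit_add_eq_of_eqOn_beta (bEnd_eq_aEnd_add B n) hL₁ hL₂ (eqOn_bstar _ _ _ _ _)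

end Orbits

section Stopping

variable {d : ℕ} (U : ES d → ℝ) (hs : ℝ) (R : ℕ)

def StopsAt (B : ℕ → Bool) (p : ES d × ES d) (k : ℕ) : Prop :=
  uturnInd U hs R (aEnd B k) (bEnd B k) p = 1 ∨
    subUturnInd U hs R p (aT B (k + 1)) (bT B (k + 1)) = 1

variable (p : ES d × ES d) (B : ℕ → Bool)

lemma not_stopsAt_iff (k : ℕ) :
    ¬ StopsAt U hs R B p k ↔ uturnInd U hs R (aEnd B k) (bEnd B k) p = 0 ∧
      subUturnInd U hs R p (aT B (k + 1)) (bT B (k + 1)) = 0 := by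
  have := uturnInd_le_one U hs R p (aEnd B k) (bEnd B k)
  have := subUturnInd_le_one U hs R p (aT B (k + 1)) (bT B (k + 1))
  unfold StopsAt
  omega

lemma not_stopsAt_zero : ¬ StopsAt U hs R B p 0 :=
  (not_stopsAt_iff U hs R p B 0).2
    ⟨uturnInd_self U hs R p 0, subUturnInd_of_not_lt U hs R p (by simp [aT, bT, aEnd, bEnd])⟩

lemma halvesSubUturnFree_orbit_iff (n : ℕ) :
    HalvesSubUturnFree U hs R p (aEnd B (n + 1)) (bEnd B (n + 1)) ↔
      subUturnInd U hs R p (aEnd B n) (bEnd B n) = 0 ∧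
        subUturnInd U hs R p (aT B (n + 1)) (bT B (n + 1)) = 0 := by
  have h := halves_orbit_succ B n
  unfold HalvesSubUturnFree
  generalize mid (aEnd B (n + 1)) (bEnd B (n + 1)) = c at h ⊢
  cases hB : B (n + 1) <;>
    simp only [hB, Bool.false_eq_true, if_false, if_true, Prod.mk.injEq] at h <;>
    rw [h.2.1, h.1.2, h.1.1, h.2.2]
  exact and_comm

lemma forall_not_stopsAt_iff (n : ℕ) :
    (∀ k < n + 1, ¬ StopsAt U hs R B p k) ↔
      HalvesSubUturnFree U hs R p (aEnd B (n + 1)) (bEnd B (n + 1)) := by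
  induction n with
  | zero =>
    rw [halvesSubUturnFree_orbit_iff, iff_true_left fun k hk => by
      rw [Nat.lt_one_iff.1 hk]; exact not_stopsAt_zero U hs R p B]
    exact ⟨subUturnInd_of_not_lt U hs R p (by simp [aEnd, bEnd]),
      subUturnInd_of_not_lt U hs R p (by simp [aT, bT, aEnd, bEnd])⟩
  | succ n ih =>
    rw [Nat.forall_lt_succ_right, ih, not_stopsAt_iff,
      halvesSubUturnFree_orbit_iff (n := n + 1),
      subUturnInd_eq_zero_iff U hs R p (aEnd_lt_bEnd B n), and_assoc]

lemma stopsAt_shift_iff {C : ℕ → Bool} {k : ℕ} {L : ℤ} (ha : aEnd C k + L = aEnd B k)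
    (hb : bEnd C k + L = bEnd B k) (hbit : C (k + 1) = B (k + 1)) :
    StopsAt U hs R C (leapfrogIter U (hs / R) (R * L) p) k ↔ StopsAt U hs R B p k := by
  have haT : aT C (k + 1) + L = aT B (k + 1) := by
    simp only [aT, Nat.add_sub_cancel, hbit]; linear_combination ha
  have hbT : bT C (k + 1) + L = bT B (k + 1) := by
    simp only [bT, Nat.add_sub_cancel, hbit]; linear_combination hb
  rw [StopsAt, StopsAt, uturnInd_shift, subUturnInd_shift, ha, hb, haT, hbT]

lemma not_stopsAt_bstar {n : ℕ} {L : ℤ} (hL₁ : aEnd B n ≤ L) (hL₂ : L ≤ bEnd B n)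
    (hB : ∀ k < n, ¬ StopsAt U hs R B p k) {k : ℕ} (hk : k < n) :
    ¬ StopsAt U hs R (bstar n L (aEnd B n) (bEnd B n) B)
      (leapfrogIter U (hs / R) (R * L) p) k := by
  obtain ⟨m, rfl⟩ : ∃ m, n = m + 1 := ⟨n - 1, by omega⟩
  obtain ⟨ha, hb⟩ := orbit_bstar_add hL₁ hL₂
  have hfree := (forall_not_stopsAt_iff U hs R p B m).1 hB
  refine (forall_not_stopsAt_iff U hs R _ _ m).2 ?_ k hk
  rwa [halvesSubUturnFree_shift, ha, hb]

end Stopping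

section EllMin

variable {d : ℕ} (U : ES d → ℝ) (hs : ℝ) (R M : ℕ) (B : ℕ → Bool) (p : ES d × ES d)

lemma ellMin_le : ellMin U hs R M B p ≤ M :=
  Nat.sInf_le (Or.inr rfl)

lemma not_stopsAt_of_lt_ellMin {k : ℕ} (hk : k < ellMin U hs R M B p) :
    ¬ StopsAt U hs R B p k := by
  intro hstop
  rcases Nat.eq_zero_or_pos k with rfl | hk₀
  · exact not_stopsAt_zero U hs R p B hstop
  · have := ellMin_le U hs R M B p
    exact Nat.notMem_of_lt_sInf hk (Or.inl ⟨hk₀, by omega, hstop⟩)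

lemma ellMin_congr {C : ℕ → Bool} {q : ES d × ES d}
    (h : ∀ k ≤ ellMin U hs R M B p, StopsAt U hs R B p k ↔ StopsAt U hs R C q k) :
    ellMin U hs R M B p = ellMin U hs R M C q :=
  Nat.sInf_eq_sInf_of_mem_iff ⟨M, Or.inr rfl⟩ fun k hk => by
    show (_ ∧ _ ∧ StopsAt U hs R B p k) ∨ _ ↔ (_ ∧ _ ∧ StopsAt U hs R C q k) ∨ _
    rw [h k hk]

end EllMin

theorem ellMin_symmetry_general {d : ℕ} (U : ES d → ℝ)
    (hs : ℝ) (R : ℕ) (M : ℕ) (B : ℕ → Bool) (p : ES d × ES d)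
    (lm : ℕ) (hlm : lm = ellMin U hs R M B p) (L : ℤ)
    (hL1 : aEnd B lm ≤ L) (hL2 : L ≤ bEnd B lm)
    (Bs : ℕ → Bool) (hBs : Bs = bstar lm L (aEnd B lm) (bEnd B lm) B) :
    ellMin U hs R M B p = ellMin U hs R M Bs (leapfrogIter U (hs / R) (R * L) p) := by
  subst hBs hlm
  have hbefore : ∀ k < ellMin U hs R M B p, ¬ StopsAt U hs R B p k :=
    fun k hk => not_stopsAt_of_lt_ellMin U hs R M B p hk
  refine ellMin_congr U hs R M B p fun k hk => ?_
  rcases hk.lt_or_eq with hk | rfl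
  · exact iff_of_false (hbefore k hk) (not_stopsAt_bstar U hs R p B hL1 hL2 hbefore hk)
  · obtain ⟨ha, hb⟩ := orbit_bstar_add hL1 hL2
    exact (stopsAt_shift_iff U hs R p B ha hb (bstar_succ _ _ _ _ _)).symm

/-- With `ℓ_min = ℓ_min(θ,ρ,B,h,R)`, `a_T = a_{ℓ_min}(B)`,
`b_T = b_{ℓ_min}(B)`, `L ∈ [a_T:b_T]` and `B* = B*(L,a_T,b_T,B)`, the number of orbit doublings
is the same from `(θ,ρ)` with `B` as from `Φ_{h/R}^{RL}(θ,ρ)` with `B*`. -/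
theorem ellMin_symmetry {d : ℕ} (U : ES d → ℝ) (hU : ContDiff ℝ 1 U)
    (hs : ℝ) (hhs : 0 < hs) (R : ℕ) (hR : 1 ≤ R) (M : ℕ) (B : ℕ → Bool) (p : ES d × ES d)
    (lm : ℕ) (hlm : lm = ellMin U hs R M B p) (L : ℤ)
    (hL1 : aEnd B lm ≤ L) (hL2 : L ≤ bEnd B lm)
    (Bs : ℕ → Bool) (hBs : Bs = bstar lm L (aEnd B lm) (bEnd B lm) B) :
    ellMin U hs R M B p = ellMin U hs R M Bs (leapfrogIter U (hs / R) (R * L) p) :=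
  ellMin_symmetry_general U hs R M B p lm hlm L hL1 hL2 Bs hBs
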